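/- arXiv:cs/0610071 — 8 statements merged into one kernel-verified Lean document; each statement's English description precedes it below -/
import Mathlib

section
/- If ∼ is an equivalence relation with finite equivalence classes on a set T, ▷ is a well-founded relation on T, and for each n, (∼▷)ⁿ ⊆ ∼(▷ⁿ) (proved by induction using ∼∼ = ∼ and ▷∼ ⊆ ∼▷), then the relation ∼▷ (the composition: t (∼▷) u iff there exists w with t ∼ w and w ▷ u) is well-founded. -/
def Comp {T : Type*} (r s : T → T → Prop) : T → T → Prop :=
  fun a b => ∃ c, r a c ∧ s c b

def RelPow {T : Type*} (r : T → T → Prop) : ℕ → T → T → Prop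
  | 0 => Eq
  | n + 1 => Comp r (RelPow r n)

/-!
Measure a term by the largest `▷`-rank in its `∼`-class, which is finite. If `b ∼ c ▷ a`, the
commutation `▷∼ ⊆ ∼▷` lifts every `u ∼ a` to some `w ∼ b` with `w ▷ u`, so each rank in the class
of `a` is exceeded by one in the class of `b`: the measure drops strictly along `∼▷`.
-/

section ClassRank

variable {T : Type*} {sim r : T → T → Prop} (hfin : ∀ t, {u | sim t u}.Finite) (hr : WellFounded r)

/-- Taking successors makes the measure of a term positive as soon as its class is nonempty. -/
noncomputable def classRank (t : T) : Ordinal :=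
  (hfin t).toFinset.sup fun u => Order.succ (hr.apply u).rank

theorem rank_lt_classRank {t u : T} (h : sim t u) : (hr.apply u).rank < classRank hfin hr t :=
  (Order.lt_succ _).trans_le <|
    Finset.le_sup (f := fun u => Order.succ (hr.apply u).rank) ((hfin t).mem_toFinset.2 h)

theorem classRank_lt_classRank {a b : T} (hab : ∀ u, sim a u → ∃ w, sim b w ∧ r u w)
    (hb : ∃ w, sim b w) : classRank hfin hr a < classRank hfin hr b := by
  obtain ⟨w₀, hw₀⟩ := hb
  have hpos : ⊥ < classRank hfin hr b := bot_le.trans_lt (rank_lt_classRank hfin hr hw₀)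
  refine (Finset.sup_lt_iff hpos).2 fun u hu => ?_
  obtain ⟨w, hbw, huw⟩ := hab u ((hfin a).mem_toFinset.1 hu)
  exact (Order.succ_le_of_lt (Acc.rank_lt_of_rel _ huw)).trans_lt (rank_lt_classRank hfin hr hbw)

end ClassRank

theorem stmt1_general {T : Type*} (sim rhd : T → T → Prop)
    (hequiv : Equivalence sim)
    (hfin : ∀ t : T, {u | sim t u}.Finite)
    (hwf : WellFounded (fun a b => rhd b a))
    (hcomm : ∀ t u v : T, rhd t u → sim u v → ∃ w, sim t w ∧ rhd w v) :
    WellFounded (fun a b => Comp sim rhd b a) := by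
  refine Subrelation.wf (fun {a b} ⟨c, hbc, hca⟩ => ?_)
    (InvImage.wf (classRank hfin hwf) Ordinal.lt_wf)
  refine classRank_lt_classRank hfin hwf (fun u hau => ?_) ⟨c, hbc⟩
  obtain ⟨w, hcw, hwu⟩ := hcomm c a u hca hau
  exact ⟨w, hequiv.trans hbc hcw, hwu⟩

/-- If `∼` is an equivalence relation with finite equivalence classes, `▷` is a
well-founded relation satisfying the commutation `▷∼ ⊆ ∼▷`, and for each `n`,
`(∼▷)ⁿ ⊆ ∼(▷ⁿ)`, then the composition `∼▷` is well-founded (strongly normalizing). -/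
theorem stmt1 {T : Type*} (sim rhd : T → T → Prop)
    (hequiv : Equivalence sim)
    (hfin : ∀ t : T, {u | sim t u}.Finite)
    (hwf : WellFounded (fun a b => rhd b a))
    (hcomm : ∀ t u v : T, rhd t u → sim u v → ∃ w, sim t w ∧ rhd w v)
    (hpow : ∀ n : ℕ, ∀ a b : T, RelPow (Comp sim rhd) n a b → Comp sim (RelPow rhd n) a b) :
    WellFounded (fun a b => Comp sim rhd b a) :=
  stmt1_general sim rhd hequiv hfin hwf hcomm
end

section
/- Let R be a relation on a type T and ∼ an equivalence relation on T such that (∀ x y y' z, y R x → y ∼ y' → y' R z → ∃ w w', x R w ∧ w ∼ w' ∧ z R w'). Then the relation S = ∼ ∘ R (defined by a S b iff ∃ c, a ∼ c ∧ c R b) is ∼-confluent on ∼-classes: for all x, y, y', z, if y S* x, y ∼ y', and y' S* z, then there exist w, w' with x S* w, w ∼ w', and z S* w'. -/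
/-- If `R` `∼`-commutes on `∼`-classes, then `S = ∼∘R` is `∼`-confluent on `∼`-classes. -/
theorem stmt2 {T : Type*} (R sim : T → T → Prop)
    (hequiv : Equivalence sim)
    (hcomm : ∀ x y y' z : T, R y x → sim y y' → R y' z →
      ∃ w w', R x w ∧ sim w w' ∧ R z w') :
    ∀ x y y' z : T,
      Relation.ReflTransGen (Comp sim R) y x → sim y y' →
      Relation.ReflTransGen (Comp sim R) y' z →
      ∃ w w', Relation.ReflTransGen (Comp sim R) x w ∧ sim w w' ∧
        Relation.ReflTransGen (Comp sim R) z w' := by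
  set S := Comp sim R with hS
  obtain ⟨hrefl, hsymm, htrans⟩ := hequiv
  -- sim absorbs into a step of S
  have absorb : ∀ a b c : T, sim a b → S b c → S a c := by
    rintro a b c hab ⟨e, hbe, hec⟩
    exact ⟨e, htrans hab hbe, hec⟩
  -- one-step diamond modulo sim
  have diamond : ∀ a b a' c : T, S a b → sim a a' → S a' c →
      ∃ d d', S b d ∧ sim d d' ∧ S c d' := by
    rintro a b a' c ⟨e, hae, heb⟩ haa' ⟨e', ha'e', he'c⟩
    have hee' : sim e e' := htrans (hsymm hae) (htrans haa' ha'e')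
    obtain ⟨w, w', hbw, hww', hcw'⟩ := hcomm b e e' c heb hee' he'c
    exact ⟨w, w', ⟨b, hrefl b, hbw⟩, hww', ⟨c, hrefl c, hcw'⟩⟩
  -- sim absorbs into S* (modulo sim at the end)
  have absorbStar : ∀ a b c : T, sim b a → Relation.ReflTransGen S a c →
      ∃ d, Relation.ReflTransGen S b d ∧ sim d c := by
    intro a b c hba hac
    rcases hac.cases_head with rfl | ⟨m, hstep, hmc⟩
    · exact ⟨b, Relation.ReflTransGen.refl, hba⟩
    · exact ⟨c, Relation.ReflTransGen.head (absorb b a m hba hstep) hmc,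
        hrefl c⟩
  -- strip lemma
  have strip : ∀ x y y' z : T, S y x → sim y y' →
      Relation.ReflTransGen S y' z →
      ∃ w w', Relation.ReflTransGen S x w ∧ sim w w' ∧ S z w' := by
    intro x y y' z hyx hyy' hy'z
    induction hy'z with
    | refl =>
      exact ⟨x, x, Relation.ReflTransGen.refl, hrefl x,
        absorb y' y x (hsymm hyy') hyx⟩
    | @tail m z' hmstar hstep ih =>
      obtain ⟨w, w', hxw, hww', hmw'⟩ := ih
      obtain ⟨d, d', hw'd, hdd', hz'd'⟩ :=
        diamond m w' m z' hmw' (hrefl m) hstep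
      have hwd : S w d := absorb w w' d hww' hw'd
      exact ⟨d, d', hxw.tail hwd, hdd', hz'd'⟩
  -- main induction
  intro x y y' z hyx
  induction hyx using Relation.ReflTransGen.head_induction_on generalizing y' z with
  | refl =>
    intro hyy' hy'z
    obtain ⟨d, hxd, hdz⟩ := absorbStar y' x z hyy' hy'z
    exact ⟨d, z, hxd, hdz, Relation.ReflTransGen.refl⟩
  | @head a m hstep hmx ih =>
    intro hay' hy'z
    obtain ⟨w1, w1', hmw1, hw1w1', hzw1'⟩ := strip m a y' z hstep hay' hy'z
    obtain ⟨u, u', hxu, huu', hw1u'⟩ := ih m w1 (hrefl m) hmw1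
    obtain ⟨d, hw1'd, hdu'⟩ := absorbStar w1 w1' u' (hsymm hw1w1') hw1u'
    exact ⟨u, d, hxu, htrans huu' (hsymm hdu'),
      Relation.ReflTransGen.head hzw1' hw1'd⟩
end

section
/- Let R be a relation and ∼ an equivalence relation on a type T. If R is ∼-confluent on ∼-classes (i.e., (R*)⁻¹ ∘ ∼ ∘ R* ⊆ R* ∘ ∼ ∘ (R*)⁻¹), then the relation ∼R (composition: a (∼R) b iff ∃c, a ∼ c ∧ c R b) is also ∼-confluent on ∼-classes. -/
/-- `∼`-confluence on `∼`-classes of a relation `X`. -/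
def SimConflOnClasses {T : Type*} (sim X : T → T → Prop) : Prop :=
  ∀ x y y' z : T,
    Relation.ReflTransGen X y x → sim y y' → Relation.ReflTransGen X y' z →
    ∃ w w', Relation.ReflTransGen X x w ∧ sim w w' ∧ Relation.ReflTransGen X z w'

open Relation (ReflTransGen ReflGen Join church_rosser)

def ReflTransGenMod {T : Type*} (sim R : T → T → Prop) : T → T → Prop :=
  Comp sim (Comp (ReflTransGen R) sim)

section

variable {T : Type*} {R sim : T → T → Prop}

theorem SimConflOnClasses.reflTransGenMod_diamond (hequiv : Equivalence sim)
    (hconf : SimConflOnClasses sim R) {a b c : T} (hab : ReflTransGenMod sim R a b)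
    (hac : ReflTransGenMod sim R a c) :
    ∃ d, ReflTransGenMod sim R b d ∧ ReflTransGenMod sim R c d := by
  obtain ⟨a₁, haa₁, b₁, ha₁b₁, hb₁b⟩ := hab
  obtain ⟨a₂, haa₂, c₁, ha₂c₁, hc₁c⟩ := hac
  obtain ⟨w, w', hb₁w, hww', hc₁w'⟩ :=
    hconf b₁ a₁ a₂ c₁ ha₁b₁ (hequiv.trans (hequiv.symm haa₁) haa₂) ha₂c₁
  exact ⟨w', ⟨b₁, hequiv.symm hb₁b, w, hb₁w, hww'⟩,
    ⟨c₁, hequiv.symm hc₁c, w', hc₁w', hequiv.refl w'⟩⟩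

theorem SimConflOnClasses.join_reflTransGen_reflTransGenMod (hequiv : Equivalence sim)
    (hconf : SimConflOnClasses sim R) {a b c : T}
    (hab : ReflTransGen (ReflTransGenMod sim R) a b)
    (hac : ReflTransGen (ReflTransGenMod sim R) a c) :
    Join (ReflTransGen (ReflTransGenMod sim R)) b c :=
  church_rosser (fun _ _ _ hab hac =>
    (hconf.reflTransGenMod_diamond hequiv hab hac).imp fun _ ⟨hbd, hcd⟩ =>
      ⟨ReflGen.single hbd, ReflTransGen.single hcd⟩) hab hac

theorem reflTransGen_comp_le_reflTransGenMod (hequiv : Equivalence sim) {a b : T}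
    (h : ReflTransGen (Comp sim R) a b) : ReflTransGen (ReflTransGenMod sim R) a b :=
  ReflTransGen.mono (fun _ d ⟨e, hce, hed⟩ => ⟨e, hce, d, .single hed, hequiv.refl d⟩) _ _ h

theorem exists_reflTransGen_comp_sim_of_sim_of_reflTransGen (hequiv : Equivalence sim)
    {a b c : T} (hab : sim a b) (hbc : ReflTransGen R b c) :
    ∃ d, ReflTransGen (Comp sim R) a d ∧ sim d c := by
  induction hbc with
  | refl => exact ⟨a, ReflTransGen.refl, hab⟩
  | @tail c e _ hce ih =>
    obtain ⟨d, had, hdc⟩ := ih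
    exact ⟨e, had.tail ⟨c, hdc, hce⟩, hequiv.refl e⟩

theorem exists_reflTransGen_comp_sim_of_reflTransGen_reflTransGenMod
    (hequiv : Equivalence sim) {a b : T} (h : ReflTransGen (ReflTransGenMod sim R) a b) :
    ∃ d, ReflTransGen (Comp sim R) a d ∧ sim d b := by
  induction h with
  | refl => exact ⟨a, ReflTransGen.refl, hequiv.refl a⟩
  | @tail c e _ hce ih =>
    obtain ⟨d, had, hdc⟩ := ih
    obtain ⟨c₁, hcc₁, c₂, hc₁c₂, hc₂e⟩ := hce
    obtain ⟨f, hdf, hfc₂⟩ :=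
      exists_reflTransGen_comp_sim_of_sim_of_reflTransGen hequiv (hequiv.trans hdc hcc₁) hc₁c₂
    exact ⟨f, had.trans hdf, hequiv.trans hfc₂ hc₂e⟩

end

/-- If `R` is `∼`-confluent on `∼`-classes then so is `∼R`. -/
theorem stmt3 {T : Type*} (R sim : T → T → Prop)
    (hequiv : Equivalence sim)
    (hconf : SimConflOnClasses sim R) :
    SimConflOnClasses sim (Comp sim R) := by
  intro x y y' z hyx hyy' hy'z
  have hyz : ReflTransGen (ReflTransGenMod sim R) y z :=
    .head ⟨y', hyy', y', .refl, hequiv.refl y'⟩ (reflTransGen_comp_le_reflTransGenMod hequiv hy'z)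
  obtain ⟨d, hxd, hzd⟩ := hconf.join_reflTransGen_reflTransGenMod hequiv
    (reflTransGen_comp_le_reflTransGenMod hequiv hyx) hyz
  obtain ⟨w, hxw, hwd⟩ := exists_reflTransGen_comp_sim_of_reflTransGen_reflTransGenMod hequiv hxd
  obtain ⟨w', hzw', hw'd⟩ := exists_reflTransGen_comp_sim_of_reflTransGen_reflTransGenMod hequiv hzd
  exact ⟨w, w', hxw, hequiv.trans hwd (hequiv.symm hw'd), hzw'⟩
end

section
/- Let β and ∼ be relations on a type T with ∼ transitive and reflexive such that ∼∘β ⊆ β∘∼. If a term t is strongly normalizing for β, then t is strongly normalizing for the composed relation ∼β (where a (∼β) b iff ∃c, a ∼ c ∧ c β b). (Proof idea: show (∼β)ⁿ ⊆ βⁿ∘∼ by induction on n.) -/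
/-! Read `∼` as a simulation: whenever
`a ∼ b` and `b` takes a `∼β`-step to `b'`, transitivity and the commutation `∼∘β ⊆ β∘∼` give a
`β`-step from `a` to some `a' ∼ b'`. Accessibility then transfers along `∼` by well-founded
induction, and reflexivity starts it at `t ∼ t`. -/

theorem Acc.of_simulation {α β : Sort*} {r : α → α → Prop} {s : β → β → Prop}
    (S : α → β → Prop) (hS : ∀ a b b', S a b → s b' b → ∃ a', r a' a ∧ S a' b')
    {a : α} (ha : Acc r a) {b : β} (hab : S a b) : Acc s b := by
  induction ha generalizing b with
  | intro a _ ih =>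
    refine ⟨_, fun b' hb' => ?_⟩
    obtain ⟨a', ha', hab'⟩ := hS a b b' hab hb'
    exact ih a' ha' hab'

theorem exists_step_of_sim_of_comp_step {T : Type*} {β sim : T → T → Prop}
    (htrans : ∀ t u v : T, sim t u → sim u v → sim t v)
    (hcomm : ∀ t u v : T, sim t u → β u v → ∃ w, β t w ∧ sim w v)
    {a b b' : T} (hab : sim a b) (hbb' : Comp sim β b b') : ∃ a', β a a' ∧ sim a' b' :=
  let ⟨_, hbc, hcb'⟩ := hbb'
  hcomm _ _ _ (htrans _ _ _ hab hbc) hcb'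

/-- If `∼` is reflexive and transitive with `∼∘β ⊆ β∘∼`, and `t` is strongly
normalizing for `β`, then `t` is strongly normalizing for `∼β`.
(Strong normalization of `t` for `R` = accessibility of `t` for the inverse of `R`.) -/
theorem stmt5 {T : Type*} (β sim : T → T → Prop)
    (hrefl : ∀ t : T, sim t t)
    (htrans : ∀ t u v : T, sim t u → sim u v → sim t v)
    (hcomm : ∀ t u v : T, sim t u → β u v → ∃ w, β t w ∧ sim w v)
    (t : T) (hsn : Acc (fun a b => β b a) t) :
    Acc (fun a b => Comp sim β b a) t :=
  hsn.of_simulation sim (fun _ _ _ hab hbb' => exists_step_of_sim_of_comp_step htrans hcomm hab hbb')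
    (hrefl t)
end

section
/- Let ▷ be a relation on a type T and ∼ a decidable equivalence relation with finite equivalence classes. Suppose ▷ is weakly normalizing and finitely branching, so there is a function nf : T → T computing a ▷-normal form with t ▷* nf(t) and nf(t) in ▷-normal form. If ▷ is ∼-confluent on ∼-classes, then for all t, u: t (▷* ∘ ∼ ∘ (▷*)⁻¹) u (i.e., t and u have ▷-reducts that are ∼-equivalent) if and only if nf(t) ∼ nf(u). Consequently, joinability modulo ∼ is decidable. -/
/-!
Confluence modulo `∼` forces normal forms of `∼`-equivalent terms, and of a term and any of
its reducts, to be `∼`-equivalent, because a normal form only reduces to itself. So every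
`▷*`-`∼`-`(▷*)⁻¹` chain from `t` to `u` collapses to `nf t ∼ nf u`, and conversely `nf t`, `nf u`
are themselves reducts witnessing joinability. Deciding joinability thus reduces to deciding
`∼` on normal forms.
-/

open Relation

namespace Relation

variable {T : Type*} {r s : T → T → Prop}

def JoinableModulo (r s : T → T → Prop) (t u : T) : Prop :=
  ∃ t' u', ReflTransGen r t t' ∧ s t' u' ∧ ReflTransGen r u u'

theorem ReflTransGen.eq_of_forall_not {a b : T} (hab : ReflTransGen r a b)
    (ha : ∀ c, ¬ r a c) : b = a := by
  rcases hab.cases_head with rfl | ⟨c, hac, -⟩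
  · rfl
  · exact absurd hac (ha c)

section NormalForm

variable {nf : T → T} (hnf₁ : ∀ t, ReflTransGen r t (nf t)) (hnf₂ : ∀ t v, ¬ r (nf t) v)
  (hconf : ∀ u t u' v, ReflTransGen r u t → s u u' → ReflTransGen r u' v →
    ∃ w w', ReflTransGen r t w ∧ s w w' ∧ ReflTransGen r v w')
include hnf₁ hnf₂ hconf

theorem sim_nf_of_reflTransGen_of_sim {t t' u u' : T} (ht : ReflTransGen r t t')
    (hu : ReflTransGen r u u') (htu : s t u) : s (nf t') (nf u') := by
  obtain ⟨w, w', hw, hww', hw'⟩ :=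
    hconf t (nf t') u (nf u') (ht.trans (hnf₁ t')) htu (hu.trans (hnf₁ u'))
  rwa [hw.eq_of_forall_not (hnf₂ t'), hw'.eq_of_forall_not (hnf₂ u')] at hww'

theorem joinableModulo_iff_sim_nf (hs : Equivalence s) (t u : T) :
    JoinableModulo r s t u ↔ s (nf t) (nf u) := by
  refine ⟨fun ⟨t', u', ht, htu, hu⟩ => ?_, fun h => ⟨nf t, nf u, hnf₁ t, h, hnf₁ u⟩⟩
  have hnf_t : s (nf t) (nf t') :=
    sim_nf_of_reflTransGen_of_sim hnf₁ hnf₂ hconf .refl ht (hs.refl t)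
  have hnf_u : s (nf u) (nf u') :=
    sim_nf_of_reflTransGen_of_sim hnf₁ hnf₂ hconf .refl hu (hs.refl u)
  have hnf_tu : s (nf t') (nf u') :=
    sim_nf_of_reflTransGen_of_sim hnf₁ hnf₂ hconf .refl .refl htu
  exact hs.trans hnf_t (hs.trans hnf_tu (hs.symm hnf_u))

end NormalForm

end Relation

theorem stmt7_general {T : Type*} (rhd sim : T → T → Prop)
    (hequiv : Equivalence sim)
    (hdec : DecidableRel sim)
    (nf : T → T)
    (hnf₁ : ∀ t : T, Relation.ReflTransGen rhd t (nf t))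
    (hnf₂ : ∀ t : T, ∀ v, ¬ rhd (nf t) v)
    (hconf : ∀ u t u' v : T, Relation.ReflTransGen rhd u t → sim u u' →
      Relation.ReflTransGen rhd u' v →
      ∃ w w', Relation.ReflTransGen rhd t w ∧ sim w w' ∧ Relation.ReflTransGen rhd v w') :
    (∀ t u : T,
      (∃ t' u', Relation.ReflTransGen rhd t t' ∧ sim t' u' ∧ Relation.ReflTransGen rhd u u')
        ↔ sim (nf t) (nf u)) ∧
    Nonempty (DecidableRel (fun t u : T =>
      ∃ t' u', Relation.ReflTransGen rhd t t' ∧ sim t' u' ∧ Relation.ReflTransGen rhd u u')) := by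
  have hjoin := joinableModulo_iff_sim_nf hnf₁ hnf₂ hconf hequiv
  exact ⟨hjoin, ⟨fun t u => @decidable_of_iff _ _ (hjoin t u).symm (hdec (nf t) (nf u))⟩⟩

/-- Let `▷` be a relation and `∼` a decidable equivalence with finite classes.
Suppose `nf` computes a `▷`-normal form of every term. If `▷` is `∼`-confluent on
`∼`-classes, then `t` and `u` are joinable modulo `∼` iff `nf t ∼ nf u`; hence
joinability modulo `∼` is decidable. -/
theorem stmt7 {T : Type*} (rhd sim : T → T → Prop)
    (hequiv : Equivalence sim)
    (hdec : DecidableRel sim)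
    (hfin : ∀ t : T, {u | sim t u}.Finite)
    (hfb : ∀ t : T, {u | rhd t u}.Finite)
    (nf : T → T)
    (hnf₁ : ∀ t : T, Relation.ReflTransGen rhd t (nf t))
    (hnf₂ : ∀ t : T, ∀ v, ¬ rhd (nf t) v)
    (hconf : ∀ u t u' v : T, Relation.ReflTransGen rhd u t → sim u u' →
      Relation.ReflTransGen rhd u' v →
      ∃ w w', Relation.ReflTransGen rhd t w ∧ sim w w' ∧ Relation.ReflTransGen rhd v w') :
    (∀ t u : T,
      (∃ t' u', Relation.ReflTransGen rhd t t' ∧ sim t' u' ∧ Relation.ReflTransGen rhd u u')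
        ↔ sim (nf t) (nf u)) ∧
    Nonempty (DecidableRel (fun t u : T =>
      ∃ t' u', Relation.ReflTransGen rhd t t' ∧ sim t' u' ∧ Relation.ReflTransGen rhd u u')) :=
  stmt7_general rhd sim hequiv hdec nf hnf₁ hnf₂ hconf
end

section
/- Let S = ∼∘R where ∼ is an equivalence relation and R a relation such that R ∼-commutes on ∼-classes (if y R x, y ∼ y', y' R z then ∃ w ∼ w' with x R w and z R w'). Then for all natural numbers p and n: (S⁻¹)ᵖ ∘ ∼ ∘ Sⁿ ⊆ Sⁿ ∘ ∼ ∘ (S⁻¹)ᵖ. In particular, taking arbitrary p and n, S* is ∼-confluent on ∼-classes. -/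
section

variable {T : Type*} {sim r r' s : T → T → Prop}

/-- `r⁻¹ ∘ sim ∘ s ⊆ s ∘ sim ∘ r⁻¹`. -/
def CommutesModulo (sim r s : T → T → Prop) : Prop :=
  ∀ ⦃x y y' z⦄, r y x → sim y y' → s y' z → ∃ w w', s x w ∧ sim w w' ∧ r z w'

theorem Equivalence.comp_comp_le (hequiv : Equivalence sim) (R : T → T → Prop) :
    Comp sim (Comp sim R) ≤ Comp (Comp sim R) sim := by
  rintro a d ⟨b, hab, c, hbc, hcd⟩
  exact ⟨d, ⟨c, hequiv.trans hab hbc, hcd⟩, hequiv.refl d⟩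

theorem comp_relPow_le_relPow_comp (hr : Comp sim r ≤ Comp r sim) :
    ∀ n, Comp sim (RelPow r n) ≤ Comp (RelPow r n) sim
  | 0, a, _, ⟨_, hab, rfl⟩ => ⟨a, rfl, hab⟩
  | n + 1, _, _, ⟨b, hab, d, hbd, hdc⟩ => by
    obtain ⟨d', had', hd'd⟩ := hr _ _ ⟨b, hab, hbd⟩
    obtain ⟨c', hd'c', hc'c⟩ := comp_relPow_le_relPow_comp hr n _ _ ⟨d, hd'd, hdc⟩
    exact ⟨c', ⟨d', had', hd'c'⟩, hc'c⟩

theorem RelPow.succ_right : ∀ {n a b c}, RelPow r n a b → r b c → RelPow r (n + 1) a c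
  | 0, _, _, c, rfl, hbc => ⟨c, hbc, rfl⟩
  | _ + 1, _, _, _, ⟨d, had, hdb⟩, hbc => ⟨d, had, RelPow.succ_right hdb hbc⟩

theorem RelPow.reflTransGen : ∀ {n a b}, RelPow r n a b → Relation.ReflTransGen r a b
  | 0, _, _, rfl => .refl
  | _ + 1, _, _, ⟨_, hac, hcb⟩ => .head hac hcb.reflTransGen

theorem reflTransGen_iff_exists_relPow {a b : T} :
    Relation.ReflTransGen r a b ↔ ∃ n, RelPow r n a b := by
  refine ⟨fun h => ?_, fun ⟨_, h⟩ => h.reflTransGen⟩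
  induction h with
  | refl => exact ⟨0, rfl⟩
  | tail _ hbc ih =>
    obtain ⟨n, hn⟩ := ih
    exact ⟨n + 1, hn.succ_right hbc⟩

namespace CommutesModulo

theorem symm (hsymm : ∀ ⦃a b⦄, sim a b → sim b a) (h : CommutesModulo sim r s) :
    CommutesModulo sim s r := by
  intro x y y' z hyx hyy' hy'z
  obtain ⟨w, w', hzw, hww', hxw'⟩ := h hy'z (hsymm hyy') hyx
  exact ⟨w', w, hxw', hsymm hww', hzw⟩

theorem eq_left (hs : Comp sim s ≤ Comp s sim) : CommutesModulo sim Eq s := by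
  rintro _ x y' z rfl hxy' hy'z
  obtain ⟨w, hxw, hwz⟩ := hs x z ⟨y', hxy', hy'z⟩
  exact ⟨w, z, hxw, hwz, rfl⟩

theorem comp_left (hequiv : Equivalence sim) (h : CommutesModulo sim r s)
    (h' : CommutesModulo sim r' s) (hr' : Comp sim r' ≤ Comp r' sim) :
    CommutesModulo sim (Comp r r') s := by
  rintro x y y' z ⟨c, hyc, hcx⟩ hyy' hy'z
  obtain ⟨w₁, w₁', hcw₁, hw₁, hzw₁'⟩ := h hyc hyy' hy'z
  obtain ⟨w₂, w₂', hxw₂, hw₂, hw₁w₂'⟩ := h' hcx (hequiv.refl c) hcw₁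
  obtain ⟨v, hw₁'v, hvw₂'⟩ := hr' w₁' w₂' ⟨w₁, hequiv.symm hw₁, hw₁w₂'⟩
  exact ⟨w₂, v, hxw₂, hequiv.trans hw₂ (hequiv.symm hvw₂'), ⟨w₁', hzw₁', hw₁'v⟩⟩

theorem relPow_left (hequiv : Equivalence sim) (h : CommutesModulo sim r s)
    (hr : Comp sim r ≤ Comp r sim) (hs : Comp sim s ≤ Comp s sim) :
    ∀ p, CommutesModulo sim (RelPow r p) s
  | 0 => eq_left hs
  | p + 1 => h.comp_left hequiv (relPow_left hequiv h hr hs p) (comp_relPow_le_relPow_comp hr p)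

theorem relPow (hequiv : Equivalence sim) (h : CommutesModulo sim r r)
    (hr : Comp sim r ≤ Comp r sim) (p n : ℕ) :
    CommutesModulo sim (RelPow r p) (RelPow r n) :=
  have hrn : CommutesModulo sim r (RelPow r n) :=
    (h.relPow_left hequiv hr hr n).symm fun _ _ => hequiv.symm
  hrn.relPow_left hequiv hr (comp_relPow_le_relPow_comp hr n) p

theorem reflTransGen (hequiv : Equivalence sim) (h : CommutesModulo sim r r)
    (hr : Comp sim r ≤ Comp r sim) :
    CommutesModulo sim (Relation.ReflTransGen r) (Relation.ReflTransGen r) := by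
  intro x y y' z hyx hyy' hy'z
  obtain ⟨p, hp⟩ := reflTransGen_iff_exists_relPow.mp hyx
  obtain ⟨n, hn⟩ := reflTransGen_iff_exists_relPow.mp hy'z
  obtain ⟨w, w', hxw, hww', hzw'⟩ := h.relPow hequiv hr p n hp hyy' hn
  exact ⟨w, w', hxw.reflTransGen, hww', hzw'.reflTransGen⟩

theorem comp_sim (hequiv : Equivalence sim) {R : T → T → Prop} (h : CommutesModulo sim R R) :
    CommutesModulo sim (Comp sim R) (Comp sim R) := by
  rintro x y y' z ⟨c, hyc, hcx⟩ hyy' ⟨c', hy'c', hc'z⟩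
  obtain ⟨w, w', hxw, hww', hzw'⟩ :=
    h hcx (hequiv.trans (hequiv.symm hyc) (hequiv.trans hyy' hy'c')) hc'z
  exact ⟨w, w', ⟨x, hequiv.refl x, hxw⟩, hww', ⟨z, hequiv.refl z, hzw'⟩⟩

end CommutesModulo

end

/-- Let `S = ∼∘R` where `∼` is an equivalence and `R` `∼`-commutes on `∼`-classes.
Then `(S⁻¹)ᵖ ∘ ∼ ∘ Sⁿ ⊆ Sⁿ ∘ ∼ ∘ (S⁻¹)ᵖ` for all `p n`; in particular `S*` is
`∼`-confluent on `∼`-classes. -/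
theorem stmt11 {T : Type*} (R sim : T → T → Prop)
    (hequiv : Equivalence sim)
    (hcomm : ∀ x y y' z : T, R y x → sim y y' → R y' z →
      ∃ w w', R x w ∧ sim w w' ∧ R z w') :
    (∀ p n : ℕ, ∀ x y y' z : T,
      RelPow (Comp sim R) p y x → sim y y' → RelPow (Comp sim R) n y' z →
      ∃ w w', RelPow (Comp sim R) n x w ∧ sim w w' ∧ RelPow (Comp sim R) p z w') ∧
    (∀ x y y' z : T,
      Relation.ReflTransGen (Comp sim R) y x → sim y y' →
      Relation.ReflTransGen (Comp sim R) y' z →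
      ∃ w w', Relation.ReflTransGen (Comp sim R) x w ∧ sim w w' ∧
        Relation.ReflTransGen (Comp sim R) z w') := by
  have hS : CommutesModulo sim (Comp sim R) (Comp sim R) :=
    CommutesModulo.comp_sim hequiv hcomm
  have hpush := hequiv.comp_comp_le R
  exact ⟨fun p n _ _ _ _ hp hsim hn => hS.relPow hequiv hpush p n hp hsim hn,
    fun _ _ _ _ hp hsim hn => hS.reflTransGen hequiv hpush hp hsim hn⟩
end

section
/- Let β, R, E be relations and ∼ the equivalence generated by a symmetric E, with ▷ = β ∪ (∼∘R) and → = β ∪ R ∪ E. If ∼ commutes with β (∼∘β ⊆ β∘∼) and ∼∘(∼∘R) ⊆ ∼∘R, then →* ⊆ ▷*∘∼: every derivation in the full relation → factors as a ▷-derivation followed by an ∼-equivalence. Consequently, the joinability relation ↓ for → equals ▷*∘∼∘(▷*)⁻¹. -/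
/-! Induction along a `→`-derivation keeps it in the form `▷*∘∼`: a trailing `E`-step is
absorbed into `∼`, an `R`-step after `∼` is a single `∼∘R`-step, and a `β`-step after `∼` is
moved in front of `∼` by the commutation hypothesis. Joinability then follows from the
symmetry of `∼` and the inclusions `▷ ⊆ →*`, `∼ ⊆ →*`. -/

open Relation (ReflTransGen Join reflTransGen_closed)

section

variable {T : Type*}

theorem Relation.ReflTransGen.exists_reflTransGen_and_equiv {β R E arr rhd : T → T → Prop}
    (harr : ∀ a b, arr a b → β a b ∨ R a b ∨ E a b)
    (hrhd : ∀ a b, β a b ∨ Comp (ReflTransGen E) R a b → rhd a b)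
    (hcomm : ∀ t u v, ReflTransGen E t u → β u v → ∃ w, β t w ∧ ReflTransGen E w v)
    {t u : T} (h : ReflTransGen arr t u) : ∃ v, ReflTransGen rhd t v ∧ ReflTransGen E v u := by
  induction h with
  | refl => exact ⟨t, .refl, .refl⟩
  | @tail b c _ hbc ih =>
    obtain ⟨v, htv, hvb⟩ := ih
    rcases harr b c hbc with hβ | hR | hE
    · obtain ⟨w, hvw, hwc⟩ := hcomm v b c hvb hβ
      exact ⟨w, htv.tail (hrhd v w (.inl hvw)), hwc⟩
    · exact ⟨c, htv.tail (hrhd v c (.inr ⟨b, hvb, hR⟩)), .refl⟩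
    · exact ⟨v, htv, hvb.tail hE⟩

theorem Relation.reflTransGen_le_of_le_modulo {β R E arr rhd : T → T → Prop}
    (harr : ∀ a b, β a b ∨ R a b ∨ E a b → arr a b)
    (hrhd : ∀ a b, rhd a b → β a b ∨ Comp (ReflTransGen E) R a b) :
    ReflTransGen rhd ≤ ReflTransGen arr := by
  refine reflTransGen_closed fun a b hab => ?_
  rcases hrhd a b hab with hβ | ⟨c, hac, hR⟩
  · exact .single (harr a b (.inl hβ))
  · have hE : ReflTransGen E ≤ ReflTransGen arr :=
      ReflTransGen.mono fun x y hE => harr x y (.inr (.inr hE))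
    exact (hE a c hac).tail (harr c b (.inr (.inl hR)))

theorem Relation.join_reflTransGen_iff_of_factor {arr rhd sim : T → T → Prop} [Std.Symm sim]
    [IsTrans T sim] (hfactor : ∀ t u, ReflTransGen arr t u → ∃ v, ReflTransGen rhd t v ∧ sim v u)
    (hrhd : ReflTransGen rhd ≤ ReflTransGen arr) (hsim : sim ≤ ReflTransGen arr) (t u : T) :
    Join (ReflTransGen arr) t u ↔
      ∃ t' u', ReflTransGen rhd t t' ∧ sim t' u' ∧ ReflTransGen rhd u u' := by
  constructor
  · rintro ⟨w, htw, huw⟩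
    obtain ⟨t', htt', ht'w⟩ := hfactor t w htw
    obtain ⟨u', huu', hu'w⟩ := hfactor u w huw
    exact ⟨t', u', htt', _root_.trans ht'w (symm hu'w), huu'⟩
  · rintro ⟨t', u', htt', ht'u', huu'⟩
    exact ⟨u', (hrhd _ _ htt').trans (hsim _ _ ht'u'), hrhd _ _ huu'⟩

end

theorem stmt13_general {T : Type*} (β R E : T → T → Prop)
    (hsym : ∀ a b : T, E a b → E b a)
    (sim : T → T → Prop) (hsim : sim = Relation.ReflTransGen E)
    (rhd : T → T → Prop) (hrhd : ∀ a b : T, rhd a b ↔ β a b ∨ Comp sim R a b)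
    (arr : T → T → Prop) (harr : ∀ a b : T, arr a b ↔ β a b ∨ R a b ∨ E a b)
    (hcomm : ∀ t u v : T, sim t u → β u v → ∃ w, β t w ∧ sim w v) :
    (∀ t u : T, Relation.ReflTransGen arr t u →
      ∃ v, Relation.ReflTransGen rhd t v ∧ sim v u) ∧
    (∀ t u : T, (∃ w, Relation.ReflTransGen arr t w ∧ Relation.ReflTransGen arr u w) ↔
      (∃ t' u', Relation.ReflTransGen rhd t t' ∧ sim t' u' ∧
        Relation.ReflTransGen rhd u u')) := by
  subst hsim
  have : Std.Symm E := ⟨hsym⟩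
  have hfactor : ∀ t u, ReflTransGen arr t u → ∃ v, ReflTransGen rhd t v ∧ ReflTransGen E v u :=
    fun _ _ => ReflTransGen.exists_reflTransGen_and_equiv (fun a b => (harr a b).mp)
      (fun a b => (hrhd a b).mpr) hcomm
  have hrhd_arr : ReflTransGen rhd ≤ ReflTransGen arr :=
    Relation.reflTransGen_le_of_le_modulo (fun a b => (harr a b).mpr) (fun a b => (hrhd a b).mp)
  have hsim_arr : ReflTransGen E ≤ ReflTransGen arr :=
    ReflTransGen.mono fun a b hE => (harr a b).mpr (.inr (.inr hE))
  exact ⟨hfactor, Relation.join_reflTransGen_iff_of_factor hfactor hrhd_arr hsim_arr⟩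

/-- With `∼ = E*` (`E` symmetric), `▷ = β ∪ (∼∘R)` and `→ = β ∪ R ∪ E`: if `∼`
commutes with `β` and `∼∘(∼∘R) ⊆ ∼∘R`, then `→* ⊆ ▷*∘∼`, and joinability for `→`
coincides with `▷*∘∼∘(▷*)⁻¹`. -/
theorem stmt13 {T : Type*} (β R E : T → T → Prop)
    (hsym : ∀ a b : T, E a b → E b a)
    (sim : T → T → Prop) (hsim : sim = Relation.ReflTransGen E)
    (rhd : T → T → Prop) (hrhd : ∀ a b : T, rhd a b ↔ β a b ∨ Comp sim R a b)
    (arr : T → T → Prop) (harr : ∀ a b : T, arr a b ↔ β a b ∨ R a b ∨ E a b)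
    (hcomm : ∀ t u v : T, sim t u → β u v → ∃ w, β t w ∧ sim w v)
    (habs : ∀ a b : T, Comp sim (Comp sim R) a b → Comp sim R a b) :
    (∀ t u : T, Relation.ReflTransGen arr t u →
      ∃ v, Relation.ReflTransGen rhd t v ∧ sim v u) ∧
    (∀ t u : T, (∃ w, Relation.ReflTransGen arr t w ∧ Relation.ReflTransGen arr u w) ↔
      (∃ t' u', Relation.ReflTransGen rhd t t' ∧ sim t' u' ∧
        Relation.ReflTransGen rhd u u')) :=
  stmt13_general β R E hsym sim hsim rhd hrhd arr harr hcomm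
end

section
/- Let R be a relation and ∼ an equivalence relation such that (i) R∘∼ is strongly normalizing, (ii) R is locally ∼-confluent (R⁻¹∘R ⊆ R*∘∼∘(R*)⁻¹), and (iii) R is locally ∼-coherent (∼₁∘R ⊆ R*∘∼∘(R*)⁻¹, where ∼₁ is the one-step generator E of ∼). Then R is ∼-confluent on ∼-classes: (R*)⁻¹∘∼∘R* ⊆ R*∘∼∘(R*)⁻¹. -/
namespace Stmt14Aux

open Relation

variable {T : Type*} (R E : T → T → Prop)

/-- one-step "strictly below the class of `a`" relation -/
def SRel (x a : T) : Prop := ∃ c d, ReflTransGen E a c ∧ R c d ∧ ReflTransGen E d x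

/-- strict class-below order -/
def Bcl : T → T → Prop := TransGen (SRel R E)

def ClQ := Quotient (EqvGen.setoid E)

def cl (a : T) : ClQ E := Quotient.mk (EqvGen.setoid E) a

def QB (u v : ClQ E) : Prop := ∃ a b, u = cl E a ∧ v = cl E b ∧ Bcl R E a b

def Lab := ClQ E × Bool

def labF (a : T) : Lab E := (cl E a, true)
def labE (a : T) : Lab E := (cl E a, false)

def LabLT (l m : Lab E) : Prop :=
  QB R E l.1 m.1 ∨ (l.1 = m.1 ∧ l.2 = false ∧ m.2 = true)

section Lemmas

variable {R E}

theorem sm_symm (hsym : ∀ a b : T, E a b → E b a) {a b : T}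
    (h : ReflTransGen E a b) : ReflTransGen E b a := by
  induction h with
  | refl => exact .refl
  | tail _ hbc ih => exact ReflTransGen.head (hsym _ _ hbc) ih

theorem cl_eq {a b : T} (h : ReflTransGen E a b) : cl E a = cl E b := by
  apply Quotient.sound
  show EqvGen E a b
  induction h with
  | refl => exact EqvGen.refl _
  | tail _ hbc ih => exact EqvGen.trans _ _ _ ih (EqvGen.rel _ _ hbc)

theorem sm_of_eqvGen (hsym : ∀ a b : T, E a b → E b a) {a b : T}
    (h : EqvGen E a b) : ReflTransGen E a b := by
  induction h with
  | rel x y hxy => exact ReflTransGen.single hxy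
  | refl => exact .refl
  | symm x y _ ih => exact sm_symm hsym ih
  | trans x y z _ _ ih₁ ih₂ => exact ih₁.trans ih₂

theorem cl_exact (hsym : ∀ a b : T, E a b → E b a) {a b : T}
    (h : cl E a = cl E b) : ReflTransGen E a b :=
  sm_of_eqvGen hsym (Quotient.exact h)

theorem srel_up {x a a' : T} (hsym : ∀ a b : T, E a b → E b a)
    (h : SRel R E x a) (haa' : ReflTransGen E a a') : SRel R E x a' := by
  obtain ⟨c, d, h₁, h₂, h₃⟩ := h
  exact ⟨c, d, (sm_symm hsym haa').trans h₁, h₂, h₃⟩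

theorem srel_low {x x' a : T} (h : SRel R E x a) (hxx' : ReflTransGen E x x') :
    SRel R E x' a := by
  obtain ⟨c, d, h₁, h₂, h₃⟩ := h
  exact ⟨c, d, h₁, h₂, h₃.trans hxx'⟩

theorem bcl_up {x a a' : T} (hsym : ∀ a b : T, E a b → E b a)
    (h : Bcl R E x a) (haa' : ReflTransGen E a a') : Bcl R E x a' := by
  induction h with
  | single h => exact TransGen.single (srel_up hsym h haa')
  | tail h₁ h₂ => exact TransGen.tail h₁ (srel_up hsym h₂ haa')

theorem bcl_low {x a : T} (h : Bcl R E x a) {x' : T}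
    (hxx' : ReflTransGen E x x') : Bcl R E x' a := by
  induction h with
  | single h => exact TransGen.single (srel_low h hxx')
  | tail _ h₂ ih => exact TransGen.tail ih h₂

theorem bcl_step {a s : T} (h : R a s) : Bcl R E s a :=
  TransGen.single ⟨a, s, .refl, h, .refl⟩

theorem bcl_R {x a y : T} (h : Bcl R E x a) (hxy : R x y) : Bcl R E y a :=
  TransGen.head ⟨x, y, .refl, hxy, .refl⟩ h

theorem bcl_star {x a y : T} (h : Bcl R E x a) (hxy : ReflTransGen R x y) :
    Bcl R E y a := by
  induction hxy with
  | refl => exact h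
  | tail _ h₂ ih => exact bcl_R ih h₂

theorem bcl_src {a b d : T} (h : ReflTransGen E a b) (h' : R b d) : Bcl R E d a :=
  TransGen.single ⟨b, d, h, h', .refl⟩

theorem wf_S (hsn : WellFounded (fun a b : T => _root_.Comp R (ReflTransGen E) b a)) :
    WellFounded (SRel R E) := by
  have claim : ∀ c : T, Acc (fun a b : T => _root_.Comp R (ReflTransGen E) b a) c →
      ∀ x d, R c d → ReflTransGen E d x → Acc (SRel R E) x := by
    intro c hc
    induction hc with
    | intro c _ ih =>
      intro x d hcd hdx
      constructor
      intro x' hx'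
      obtain ⟨c', d', hxc', hc'd', hd'x'⟩ := hx'
      exact ih c' ⟨d, hcd, hdx.trans hxc'⟩ x' d' hc'd' hd'x'
  constructor
  intro x
  constructor
  intro y hy
  obtain ⟨c, d, hxc, hcd, hdy⟩ := hy
  exact claim c (hsn.apply c) y d hcd hdy

theorem wf_lab (hsym : ∀ a b : T, E a b → E b a)
    (wfb : WellFounded (Bcl R E)) : WellFounded (LabLT R E) := by
  have key : ∀ x : T, Acc (Bcl R E) x → ∀ x' : T, ReflTransGen E x x' →
      Acc (LabLT R E) (labE E x') ∧ Acc (LabLT R E) (labF E x') := by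
    intro x hx
    induction hx with
    | intro x _ ih =>
      intro x' hxx'
      have step : ∀ a' : T, Bcl R E a' x' →
          Acc (LabLT R E) (labE E a') ∧ Acc (LabLT R E) (labF E a') := by
        intro a' ha'
        have : Bcl R E a' x := bcl_up hsym ha' (sm_symm hsym hxx')
        exact ih a' this a' .refl
      have hE : Acc (LabLT R E) (labE E x') := by
        constructor
        intro l hl
        rcases hl with ⟨a', b', ha', hb', hab⟩ | ⟨_, _, htag⟩
        · have hb : ReflTransGen E b' x' := cl_exact hsym hb'.symm
          have hax : Bcl R E a' x' := bcl_up hsym hab hb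
          have := step a' hax
          have hleq : l = (cl E a', l.2) := Prod.ext ha' rfl
          rw [hleq]
          cases h2 : l.2
          · exact this.1
          · exact this.2
        · simp [labE] at htag
      have hF : Acc (LabLT R E) (labF E x') := by
        constructor
        intro l hl
        rcases hl with ⟨a', b', ha', hb', hab⟩ | ⟨h1, h2, _⟩
        · have hb : ReflTransGen E b' x' := cl_exact hsym hb'.symm
          have hax : Bcl R E a' x' := bcl_up hsym hab hb
          have := step a' hax
          have hleq : l = (cl E a', l.2) := Prod.ext ha' rfl
          rw [hleq]
          cases l.2
          · exact this.1
          · exact this.2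
        · have : l = labE E x' := Prod.ext h1 h2
          rw [this]; exact hE
      exact ⟨hE, hF⟩
  constructor
  intro l
  obtain ⟨q, t⟩ := l
  obtain ⟨a, rfl⟩ := Quotient.exists_rep q
  cases t
  · exact (key a (wfb.apply a) a .refl).1
  · exact (key a (wfb.apply a) a .refl).2

end Lemmas

def MStep (N M : Multiset (Lab E)) : Prop :=
  ∃ a Z Y, M = a ::ₘ Z ∧ N = Z + Y ∧ ∀ y ∈ Y, LabLT R E y a

def MLT : Multiset (Lab E) → Multiset (Lab E) → Prop := TransGen (MStep R E)

section MLemmas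

variable {R E}

theorem wf_MStep (wfl : WellFounded (LabLT R E)) : WellFounded (MStep R E) := by
  have hadd : ∀ a : Lab E, Acc (LabLT R E) a →
      ∀ M : Multiset (Lab E), Acc (MStep R E) M → Acc (MStep R E) (a ::ₘ M) := by
    intro a ha
    induction ha with
    | intro a _ iha =>
      intro M hM
      induction hM with
      | intro M hMacc ihM =>
        constructor
        intro N hN
        obtain ⟨b, Z, Y, hMZ, hNZ, hY⟩ := hN
        rcases Multiset.cons_eq_cons.mp hMZ with ⟨rfl, rfl⟩ | ⟨hne, W, hZW, hMW⟩
        · subst hNZ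
          have grow : ∀ Y' : Multiset (Lab E), (∀ y ∈ Y', LabLT R E y a) →
              Acc (MStep R E) (M + Y') := by
            intro Y'
            induction Y' using Multiset.induction with
            | empty => intro _; simpa using Acc.intro M hMacc
            | cons y Ys ihY =>
              intro hall
              have : M + (y ::ₘ Ys) = y ::ₘ (M + Ys) := by
                rw [Multiset.add_cons]
              rw [this]
              exact iha y (hall y (Multiset.mem_cons_self _ _)) _
                (ihY fun z hz => hall z (Multiset.mem_cons_of_mem hz))
          exact grow Y hY
        · -- M = b ::ₘ W, Z = a ::ₘ W
          have hstep : MStep R E (W + Y) M := ⟨b, W, Y, hZW, rfl, hY⟩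
          have hacc := ihM (W + Y) hstep
          have : N = a ::ₘ (W + Y) := by
            rw [hNZ, hMW, Multiset.cons_add]
          rw [this]
          exact hacc
  constructor
  intro M
  induction M using Multiset.induction with
  | empty =>
    constructor
    intro N hN
    obtain ⟨b, Z, Y, hMZ, _, _⟩ := hN
    exact absurd hMZ.symm (Multiset.cons_ne_zero)
  | cons a M ih => exact hadd a (wfl.apply a) M ih

theorem mstep_cons {N M : Multiset (Lab E)} (l : Lab E) (h : MStep R E N M) :
    MStep R E (l ::ₘ N) (l ::ₘ M) := by
  obtain ⟨a, Z, Y, hMZ, hNZ, hY⟩ := h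
  exact ⟨a, l ::ₘ Z, Y, by rw [hMZ, Multiset.cons_swap], by rw [hNZ, Multiset.cons_add], hY⟩

theorem mlt_cons {N M : Multiset (Lab E)} (l : Lab E) (h : MLT R E N M) :
    MLT R E (l ::ₘ N) (l ::ₘ M) := by
  induction h with
  | single h => exact TransGen.single (mstep_cons l h)
  | tail _ h₂ ih => exact TransGen.tail ih (mstep_cons l h₂)

theorem mlt_of₁ {N M Z Y : Multiset (Lab E)} {x : Lab E}
    (hM : M = x ::ₘ Z) (hN : N = Z + Y) (hY : ∀ y ∈ Y, LabLT R E y x) :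
    MLT R E N M :=
  TransGen.single ⟨x, Z, Y, hM, hN, hY⟩

open Classical in
theorem mlt_of₂ {N M Z Y : Multiset (Lab E)} {x₁ x₂ : Lab E}
    (hM : M = x₁ ::ₘ x₂ ::ₘ Z) (hN : N = Z + Y)
    (hY : ∀ y ∈ Y, LabLT R E y x₁ ∨ LabLT R E y x₂) :
    MLT R E N M := by
  classical
  set Y₁ := Y.filter (fun y => LabLT R E y x₁) with hY₁
  set Y₂ := Y.filter (fun y => ¬ LabLT R E y x₁) with hY₂
  have hsplit : Y₁ + Y₂ = Y := Multiset.filter_add_not _ _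
  have s₁ : MStep R E ((x₂ ::ₘ Z) + Y₁) M := ⟨x₁, x₂ ::ₘ Z, Y₁, hM, rfl,
    fun y hy => (Multiset.mem_filter.mp hy).2⟩
  have s₂ : MStep R E ((Z + Y₁) + Y₂) ((x₂ ::ₘ Z) + Y₁) := by
    refine ⟨x₂, Z + Y₁, Y₂, by rw [Multiset.cons_add], rfl, ?_⟩
    intro y hy
    obtain ⟨hyY, hny⟩ := Multiset.mem_filter.mp hy
    exact (hY y hyY).resolve_left hny
  have : N = (Z + Y₁) + Y₂ := by rw [hN, add_assoc, hsplit]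
  rw [this]
  exact TransGen.head s₂ (TransGen.single s₁)

end MLemmas

/-- conversion sequences, with their multiset measure as an index -/
inductive SeqM : T → T → Multiset (Lab E) → Prop
  | nil (a : T) : SeqM a a 0
  | consF {a b c : T} {M : Multiset (Lab E)} :
      R a b → SeqM b c M → SeqM a c (labF E a ::ₘ M)
  | consB {a b c : T} {M : Multiset (Lab E)} :
      R b a → SeqM b c M → SeqM a c (labF E b ::ₘ M)
  | consE {a b c : T} {M : Multiset (Lab E)} :
      E a b → SeqM b c M → SeqM a c (labE E a ::ₘ M)

/-- backward-only sequences -/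
inductive BwM : T → T → Multiset (Lab E) → Prop
  | nil (a : T) : BwM a a 0
  | cons {a b c : T} {M : Multiset (Lab E)} :
      R b a → BwM b c M → BwM a c (labF E b ::ₘ M)

/-- equivalence steps then backward steps -/
inductive EBM : T → T → Multiset (Lab E) → Prop
  | base {a c : T} {M : Multiset (Lab E)} : BwM R E a c M → EBM a c M
  | cons {a b c : T} {M : Multiset (Lab E)} :
      E a b → EBM b c M → EBM a c (labE E a ::ₘ M)

/-- valleys: forward steps, then equivalence steps, then backward steps -/
inductive ValM : T → T → Multiset (Lab E) → Prop
  | base {a c : T} {M : Multiset (Lab E)} : EBM R E a c M → ValM a c M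
  | cons {a b c : T} {M : Multiset (Lab E)} :
      R a b → ValM b c M → ValM a c (labF E a ::ₘ M)

def J (a b : T) : Prop :=
  ∃ w w', ReflTransGen R a w ∧ ReflTransGen E w w' ∧ ReflTransGen R b w'

section SLemmas

variable {R E}

theorem seqm_cast {a c : T} {M N : Multiset (Lab E)} (h : SeqM R E a c M)
    (e : M = N) : SeqM R E a c N := e ▸ h

theorem seqm_append {a b c : T} {M N : Multiset (Lab E)}
    (h₁ : SeqM R E a b M) (h₂ : SeqM R E b c N) : SeqM R E a c (M + N) := by
  induction h₁ with
  | nil => simpa using h₂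
  | consF h q ih => exact seqm_cast (SeqM.consF h (ih h₂)) (by rw [Multiset.cons_add])
  | consB h q ih => exact seqm_cast (SeqM.consB h (ih h₂)) (by rw [Multiset.cons_add])
  | consE h q ih => exact seqm_cast (SeqM.consE h (ih h₂)) (by rw [Multiset.cons_add])

theorem bwm_seq {a c : T} {M : Multiset (Lab E)} (h : BwM R E a c M) :
    SeqM R E a c M := by
  induction h with
  | nil a => exact SeqM.nil a
  | cons h _ ih => exact SeqM.consB h ih

theorem ebm_seq {a c : T} {M : Multiset (Lab E)} (h : EBM R E a c M) :
    SeqM R E a c M := by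
  induction h with
  | base h => exact bwm_seq h
  | cons h _ ih => exact SeqM.consE h ih

theorem valm_seq {a c : T} {M : Multiset (Lab E)} (h : ValM R E a c M) :
    SeqM R E a c M := by
  induction h with
  | base h => exact ebm_seq h
  | cons h _ ih => exact SeqM.consF h ih

theorem bwm_star {a c : T} {M : Multiset (Lab E)} (h : BwM R E a c M) :
    ReflTransGen R c a := by
  induction h with
  | nil => exact .refl
  | cons h _ ih => exact ih.tail h

theorem ebm_j {a c : T} {M : Multiset (Lab E)} (h : EBM R E a c M) :
    ∃ w', ReflTransGen E a w' ∧ ReflTransGen R c w' := by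
  induction h with
  | base h => exact ⟨_, .refl, bwm_star h⟩
  | cons h _ ih =>
    obtain ⟨w', h₁, h₂⟩ := ih
    exact ⟨w', ReflTransGen.head h h₁, h₂⟩

theorem valm_j {a c : T} {M : Multiset (Lab E)} (h : ValM R E a c M) : J R E a c := by
  induction h with
  | base h =>
    obtain ⟨w', h₁, h₂⟩ := ebm_j h
    exact ⟨_, w', .refl, h₁, h₂⟩
  | cons h _ ih =>
    obtain ⟨w, w', h₁, h₂, h₃⟩ := ih
    exact ⟨w, w', ReflTransGen.head h h₁, h₂, h₃⟩

/-- build a forward sequence from a reduction -/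
theorem mkF {s p : T} (h : ReflTransGen R s p) :
    ∃ M : Multiset (Lab E), SeqM R E s p M ∧
      ∀ l ∈ M, ∃ x, l = labF E x ∧ ReflTransGen R s x := by
  induction h using Relation.ReflTransGen.head_induction_on with
  | refl => exact ⟨0, SeqM.nil _, by simp⟩
  | head h₁ h₂ ih =>
    obtain ⟨M, sq, hM⟩ := ih
    refine ⟨labF E _ ::ₘ M, SeqM.consF h₁ sq, ?_⟩
    intro l hl
    rcases Multiset.mem_cons.mp hl with rfl | hl
    · exact ⟨_, rfl, .refl⟩
    · obtain ⟨x, rfl, hx⟩ := hM l hl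
      exact ⟨x, rfl, ReflTransGen.head h₁ hx⟩

/-- build a backward sequence from a reduction -/
theorem mkB {c p : T} (h : ReflTransGen R c p) :
    ∃ M : Multiset (Lab E), SeqM R E p c M ∧
      ∀ l ∈ M, ∃ x, l = labF E x ∧ ReflTransGen R c x := by
  induction h using Relation.ReflTransGen.head_induction_on with
  | refl => exact ⟨0, SeqM.nil _, by simp⟩
  | head h₁ h₂ ih =>
    obtain ⟨M, sq, hM⟩ := ih
    refine ⟨M + (labF E _ ::ₘ 0), seqm_append sq (SeqM.consB h₁ (SeqM.nil _)), ?_⟩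
    intro l hl
    rcases Multiset.mem_add.mp hl with hl | hl
    · obtain ⟨x, rfl, hx⟩ := hM l hl
      exact ⟨x, rfl, ReflTransGen.head h₁ hx⟩
    · rcases Multiset.mem_cons.mp hl with rfl | hl
      · exact ⟨_, rfl, .refl⟩
      · simp at hl
  
/-- build an equivalence sequence from a `∼`-proof -/
theorem mkE {w w' : T} (h : ReflTransGen E w w') :
    ∃ M : Multiset (Lab E), SeqM R E w w' M ∧ ∀ l ∈ M, l = labE E w := by
  induction h using Relation.ReflTransGen.head_induction_on with
  | refl => exact ⟨0, SeqM.nil _, by simp⟩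
  | head h₁ h₂ ih =>
    obtain ⟨M, sq, hM⟩ := ih
    refine ⟨labE E _ ::ₘ M, SeqM.consE h₁ sq, ?_⟩
    intro l hl
    rcases Multiset.mem_cons.mp hl with rfl | hl
    · rfl
    · rw [hM l hl]
      unfold labE
      rw [cl_eq (ReflTransGen.single h₁)]

theorem lt_lab_of_bcl {l m : Lab E} {x y : T} (hl : l.1 = cl E x)
    (hm : m.1 = cl E y) (h : Bcl R E x y) : LabLT R E l m :=
  Or.inl ⟨x, y, hl, hm, h⟩

theorem lt_EF_same {a b : T} (h : cl E a = cl E b) :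
    LabLT R E (labE E a) (labF E b) :=
  Or.inr ⟨h, rfl, rfl⟩

theorem scan (hsym : ∀ a b : T, E a b → E b a)
    (hlc : ∀ t u v : T, R t u → R t v → ∃ w w',
      ReflTransGen R u w ∧ ReflTransGen E w w' ∧ ReflTransGen R v w')
    (hcoh : ∀ t u v : T, E t u → R u v → ∃ w w',
      ReflTransGen R t w ∧ ReflTransGen E w w' ∧ ReflTransGen R v w')
    {a c : T} {M : Multiset (Lab E)} (h : SeqM R E a c M) :
    ValM R E a c M ∨ ∃ N, MLT R E N M ∧ SeqM R E a c N := by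
  induction h with
  | nil a => exact Or.inl (ValM.base (EBM.base (BwM.nil a)))
  | consF hab q ih =>
    rcases ih with hv | ⟨N, hlt, q'⟩
    · exact Or.inl (ValM.cons hab hv)
    · exact Or.inr ⟨_, mlt_cons _ hlt, SeqM.consF hab q'⟩
  | consE hab q ih =>
    rename_i a b c Mq
    rcases ih with hv | ⟨N, hlt, q'⟩
    · cases hv with
      | base eb => exact Or.inl (ValM.base (EBM.cons hab eb))
      | cons hbd v =>
        rename_i d M₂
        obtain ⟨p, p', hap, hpp', hdp'⟩ := hcoh a b d hab hbd
        obtain ⟨MB, sB, hMB⟩ := mkB (R := R) (E := E) hdp'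
        obtain ⟨ME, sE, hME⟩ := mkE (R := R) (E := E) hpp'
        have seq₂ : SeqM R E d c M₂ := valm_seq v
        have hclab : cl E a = cl E b := cl_eq (ReflTransGen.single hab)
        have hBda : Bcl R E d a := bcl_src (ReflTransGen.single hab) hbd
        rcases hap.cases_head with rfl | ⟨s, has, hsp⟩
        · refine Or.inr ⟨ME + (MB + M₂), ?_, seqm_append sE (seqm_append sB seq₂)⟩
          refine mlt_of₂ (x₁ := labE E a) (x₂ := labF E b) (Z := M₂)
            (Y := ME + MB) rfl (by abel) ?_
          intro y hy
          rcases Multiset.mem_add.mp hy with hy | hy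
          · right
            rw [hME y hy]
            exact lt_EF_same hclab
          · left
            obtain ⟨x, rfl, hdx⟩ := hMB y hy
            exact lt_lab_of_bcl rfl rfl (bcl_star hBda hdx)
        · obtain ⟨MF, sF, hMF⟩ := mkF (E := E) hsp
          have hBsa : Bcl R E s a := bcl_step has
          refine Or.inr ⟨labF E a ::ₘ (MF + (ME + (MB + M₂))), ?_,
            SeqM.consF has (seqm_append sF (seqm_append sE (seqm_append sB seq₂)))⟩
          have hMeq : labE E a ::ₘ labF E b ::ₘ M₂ = labF E a ::ₘ (labE E a ::ₘ M₂) := by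
            have hfb : labF E b = labF E a := by unfold labF; rw [hclab]
            rw [hfb, Multiset.cons_swap]
          rw [hMeq]
          refine mlt_cons _ (mlt_of₁ (x := labE E a) (Z := M₂)
            (Y := MF + (ME + MB)) rfl (by abel) ?_)
          intro y hy
          rcases Multiset.mem_add.mp hy with hy | hy
          · obtain ⟨x, rfl, hsx⟩ := hMF y hy
            exact lt_lab_of_bcl rfl rfl (bcl_star hBsa hsx)
          rcases Multiset.mem_add.mp hy with hy | hy
          · rw [hME y hy]
            exact lt_lab_of_bcl rfl rfl (bcl_star hBsa hsp)
          · obtain ⟨x, rfl, hdx⟩ := hMB y hy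
            exact lt_lab_of_bcl rfl rfl (bcl_star hBda hdx)
    · exact Or.inr ⟨_, mlt_cons _ hlt, SeqM.consE hab q'⟩
  | consB hba q ih =>
    rename_i a b c Mq
    rcases ih with hv | ⟨N, hlt, q'⟩
    · cases hv with
      | cons hbd v =>
        rename_i d M₂
        obtain ⟨z, z', haz, hzz', hdz'⟩ := hlc b a d hba hbd
        obtain ⟨MF, sF, hMF⟩ := mkF (E := E) haz
        obtain ⟨ME, sE, hME⟩ := mkE (R := R) (E := E) hzz'
        obtain ⟨MB, sB, hMB⟩ := mkB (R := R) (E := E) hdz'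
        have seq₂ : SeqM R E d c M₂ := valm_seq v
        have hBab : Bcl R E a b := bcl_step hba
        have hBdb : Bcl R E d b := bcl_step hbd
        refine Or.inr ⟨MF + (ME + (MB + M₂)), ?_,
          seqm_append sF (seqm_append sE (seqm_append sB seq₂))⟩
        refine mlt_of₂ (x₁ := labF E b) (x₂ := labF E b) (Z := M₂)
          (Y := MF + (ME + MB)) rfl (by abel) ?_
        intro y hy
        left
        rcases Multiset.mem_add.mp hy with hy | hy
        · obtain ⟨x, rfl, hax⟩ := hMF y hy
          exact lt_lab_of_bcl rfl rfl (bcl_star hBab hax)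
        rcases Multiset.mem_add.mp hy with hy | hy
        · rw [hME y hy]
          exact lt_lab_of_bcl rfl rfl (bcl_star hBab haz)
        · obtain ⟨x, rfl, hdx⟩ := hMB y hy
          exact lt_lab_of_bcl rfl rfl (bcl_star hBdb hdx)
      | base eb =>
        cases eb with
        | base bw => exact Or.inl (ValM.base (EBM.base (BwM.cons hba bw)))
        | cons hbe eb₂ =>
          rename_i e M₂
          obtain ⟨z, z', hez, hzz', haz'⟩ := hcoh e b a (hsym b e hbe) hba
          have seq₂ : SeqM R E e c M₂ := ebm_seq eb₂
          obtain ⟨MF, sF, hMF⟩ := mkF (E := E) haz'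
          obtain ⟨ME, sE, hME⟩ := mkE (R := R) (E := E) (sm_symm hsym hzz')
          have hBab : Bcl R E a b := bcl_step hba
          have hBz'b : Bcl R E z' b := bcl_star hBab haz'
          have hclbe : cl E b = cl E e := cl_eq (ReflTransGen.single hbe)
          have hsmeb : ReflTransGen E e b := sm_symm hsym (ReflTransGen.single hbe)
          rcases hez.cases_head with rfl | ⟨s, hes, hsz⟩
          · refine Or.inr ⟨MF + (ME + M₂), ?_, seqm_append sF (seqm_append sE seq₂)⟩
            refine mlt_of₂ (x₁ := labF E b) (x₂ := labE E b) (Z := M₂)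
              (Y := MF + ME) rfl (by abel) ?_
            intro y hy
            left
            rcases Multiset.mem_add.mp hy with hy | hy
            · obtain ⟨x, rfl, hax⟩ := hMF y hy
              exact lt_lab_of_bcl rfl rfl (bcl_star hBab hax)
            · rw [hME y hy]
              exact lt_lab_of_bcl rfl rfl hBz'b
          · obtain ⟨MB, sB, hMB⟩ := mkB (R := R) (E := E) hsz
            have hBse : Bcl R E s e := bcl_step hes
            have seqZE : SeqM R E z e (MB + (labF E e ::ₘ 0)) :=
              seqm_append sB (SeqM.consB hes (SeqM.nil e))
            refine Or.inr ⟨MF + (ME + ((MB + (labF E e ::ₘ 0)) + M₂)), ?_,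
              seqm_append sF (seqm_append sE (seqm_append seqZE seq₂))⟩
            have hfe : labF E e = labF E b := by unfold labF; rw [hclbe]
            rw [Multiset.cons_swap]
            refine mlt_of₁ (x := labE E b) (Z := labF E b ::ₘ M₂)
              (Y := MF + (ME + MB)) rfl ?_ ?_
            · rw [hfe]
              simp only [← Multiset.singleton_add, add_zero]
              abel
            · intro y hy
              rcases Multiset.mem_add.mp hy with hy | hy
              · obtain ⟨x, rfl, hax⟩ := hMF y hy
                exact lt_lab_of_bcl rfl rfl (bcl_star hBab hax)
              rcases Multiset.mem_add.mp hy with hy | hy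
              · rw [hME y hy]
                exact lt_lab_of_bcl rfl rfl hBz'b
              · obtain ⟨x, rfl, hsx⟩ := hMB y hy
                exact lt_lab_of_bcl rfl rfl (bcl_up hsym (bcl_star hBse hsx) hsmeb)
    · exact Or.inr ⟨_, mlt_cons _ hlt, SeqM.consB hba q'⟩

theorem main (hsym : ∀ a b : T, E a b → E b a)
    (hsn : WellFounded (fun a b : T => _root_.Comp R (ReflTransGen E) b a))
    (hlc : ∀ t u v : T, R t u → R t v → ∃ w w',
      ReflTransGen R u w ∧ ReflTransGen E w w' ∧ ReflTransGen R v w')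
    (hcoh : ∀ t u v : T, E t u → R u v → ∃ w w',
      ReflTransGen R t w ∧ ReflTransGen E w w' ∧ ReflTransGen R v w') :
    ∀ (M : Multiset (Lab E)) (a c : T), SeqM R E a c M → J R E a c := by
  have wfb : WellFounded (Bcl R E) := (wf_S hsn).transGen
  have wfm : WellFounded (MLT R E) := (wf_MStep (wf_lab hsym wfb)).transGen
  intro M
  induction M using wfm.induction with
  | _ M ih =>
    intro a c h
    rcases scan hsym hlc hcoh h with hv | ⟨N, hlt, h'⟩
    · exact valm_j hv
    · exact ih N hlt a c h'

end SLemmas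

end Stmt14Aux

/-- Huet-style criterion: let `E` be symmetric, `∼ = E*`, and `R` a relation such
that (i) `R∘∼` is strongly normalizing, (ii) `R` is locally `∼`-confluent, (iii) `R`
is locally `∼`-coherent. Then `R` is `∼`-confluent on `∼`-classes. -/
theorem stmt14 {T : Type*} (R E : T → T → Prop)
    (hsym : ∀ a b : T, E a b → E b a)
    (sim : T → T → Prop) (hsim : sim = Relation.ReflTransGen E)
    (hsn : WellFounded (fun a b : T => Comp R sim b a))
    (hlc : ∀ t u v : T, R t u → R t v →
      ∃ w w', Relation.ReflTransGen R u w ∧ sim w w' ∧ Relation.ReflTransGen R v w')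
    (hcoh : ∀ t u v : T, E t u → R u v →
      ∃ w w', Relation.ReflTransGen R t w ∧ sim w w' ∧ Relation.ReflTransGen R v w') :
    ∀ u t u' v : T, Relation.ReflTransGen R u t → sim u u' →
      Relation.ReflTransGen R u' v →
      ∃ w w', Relation.ReflTransGen R t w ∧ sim w w' ∧ Relation.ReflTransGen R v w' := by
  subst hsim
  intro u t u' v hut huu' hu'v
  obtain ⟨M₁, s₁, -⟩ := Stmt14Aux.mkB (R := R) (E := E) hut
  obtain ⟨M₂, s₂, -⟩ := Stmt14Aux.mkE (R := R) (E := E) huu'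
  obtain ⟨M₃, s₃, -⟩ := Stmt14Aux.mkF (R := R) (E := E) hu'v
  exact Stmt14Aux.main hsym hsn hlc hcoh _ t v
    (Stmt14Aux.seqm_append (Stmt14Aux.seqm_append s₁ s₂) s₃)
end
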